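/- arXiv:1307.1612 — 2 statements merged into one kernel-verified Lean document; each statement's English description precedes it below -/
import Mathlib

section
/- The pointwise product is bilinear and continuous from C^0_{ω,ρ}(cl Ω) × C^0_{ω,ρ}(cl Ω) to C^0_{ω,ρ'}(cl Ω) for every ρ' ∈ ]0,ρ[; i.e., there exists a constant C ≥ 0 such that ‖uv‖_{C^0_{ω,ρ'}} ≤ C ‖u‖_{C^0_{ω,ρ}} ‖v‖_{C^0_{ω,ρ}} for all u, v in C^0_{ω,ρ}(cl Ω). -/
open MeasureTheory Bornology
open scoped ENNReal

noncomputable section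

/-- Partial derivative in the `i`-th coordinate direction. -/
def pderiv' (n : ℕ) (i : Fin n) (f : (Fin n → ℝ) → ℝ) : (Fin n → ℝ) → ℝ :=
  fun x => fderiv ℝ f x (Pi.single i 1)

/-- The multi-index partial derivative `D^β f`. -/
def mderiv (n : ℕ) (β : Fin n → ℕ) (f : (Fin n → ℝ) → ℝ) : (Fin n → ℝ) → ℝ :=
  (List.finRange n).foldr (fun i g => (pderiv' n i)^[β i] g) f

/-- The Roumieu norm `sup_β (ρ^{|β|}/|β|!) ‖D^β u‖_{C^0(K)}` (with value in `ℝ≥0∞`). -/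
def roumieuSeminorm (n : ℕ) (ρ : ℝ) (K : Set (Fin n → ℝ)) (u : (Fin n → ℝ) → ℝ) : ℝ≥0∞ :=
  ⨆ β : Fin n → ℕ, ⨆ x ∈ K,
    ENNReal.ofReal (ρ ^ (∑ i, β i) / (∑ i, β i).factorial * |mderiv n β u x|)

lemma pderiv'_contDiff {n : ℕ} {i : Fin n} {f : (Fin n → ℝ) → ℝ}
    (hf : ContDiff ℝ (⊤ : ℕ∞) f) : ContDiff ℝ (⊤ : ℕ∞) (pderiv' n i f) := by
  have h : ContDiff ℝ (⊤ : ℕ∞) (fderiv ℝ f) := hf.fderiv_right (by exact_mod_cast le_rfl)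
  exact h.clm_apply contDiff_const

lemma pderiv'_add {n : ℕ} {i : Fin n} {f g : (Fin n → ℝ) → ℝ}
    (hf : Differentiable ℝ f) (hg : Differentiable ℝ g) :
    pderiv' n i (f + g) = pderiv' n i f + pderiv' n i g := by
  funext x
  simp only [pderiv', Pi.add_apply]
  rw [show (f + g) = fun y => f y + g y from rfl, fderiv_fun_add (hf x) (hg x)]
  simp

lemma pderiv'_smul {n : ℕ} {i : Fin n} {c : ℝ} {f : (Fin n → ℝ) → ℝ}
    (hf : Differentiable ℝ f) :
    pderiv' n i (c • f) = c • pderiv' n i f := by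
  funext x
  simp only [pderiv', Pi.smul_apply, smul_eq_mul]
  rw [show (c • f) = fun y => c • f y from rfl, fderiv_fun_const_smul (hf x)]
  simp

lemma pderiv'_mul {n : ℕ} {i : Fin n} {f g : (Fin n → ℝ) → ℝ}
    (hf : Differentiable ℝ f) (hg : Differentiable ℝ g) :
    pderiv' n i (f * g) = pderiv' n i f * g + f * pderiv' n i g := by
  funext x
  simp only [pderiv', Pi.add_apply, Pi.mul_apply]
  rw [show (f * g) = fun y => f y * g y from rfl, fderiv_fun_mul (hf x) (hg x)]
  simp
  ring

lemma pderiv'_sum {n : ℕ} {i : Fin n} {α : Type*} {s : Finset α}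
    {f : α → (Fin n → ℝ) → ℝ} (hf : ∀ a ∈ s, Differentiable ℝ (f a)) :
    pderiv' n i (∑ a ∈ s, f a) = ∑ a ∈ s, pderiv' n i (f a) := by
  funext x
  simp only [pderiv', Finset.sum_apply]
  rw [show (∑ a ∈ s, f a) = fun y => ∑ a ∈ s, f a y from by funext y; simp,
    fderiv_fun_sum (fun a ha => (hf a ha) x)]
  simp

lemma iter_contDiff {n : ℕ} {i : Fin n} {f : (Fin n → ℝ) → ℝ} (k : ℕ)
    (hf : ContDiff ℝ (⊤ : ℕ∞) f) : ContDiff ℝ (⊤ : ℕ∞) ((pderiv' n i)^[k] f) := by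
  induction k with
  | zero => exact hf
  | succ k ih => rw [Function.iterate_succ_apply']; exact pderiv'_contDiff ih

lemma iter_smul {n : ℕ} {i : Fin n} {c : ℝ} {f : (Fin n → ℝ) → ℝ} (k : ℕ)
    (hf : ContDiff ℝ (⊤ : ℕ∞) f) :
    (pderiv' n i)^[k] (c • f) = c • (pderiv' n i)^[k] f := by
  induction k with
  | zero => rfl
  | succ k ih =>
    rw [Function.iterate_succ_apply', Function.iterate_succ_apply', ih,
      pderiv'_smul ((iter_contDiff k hf).differentiable (by simp))]

lemma iter_sum {n : ℕ} {i : Fin n} {α : Type*} {s : Finset α}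
    {f : α → (Fin n → ℝ) → ℝ} (k : ℕ) (hf : ∀ a ∈ s, ContDiff ℝ (⊤ : ℕ∞) (f a)) :
    (pderiv' n i)^[k] (∑ a ∈ s, f a) = ∑ a ∈ s, (pderiv' n i)^[k] (f a) := by
  induction k with
  | zero => rfl
  | succ k ih =>
    rw [Function.iterate_succ_apply', ih,
      pderiv'_sum (fun a ha => ((iter_contDiff k (hf a ha)).differentiable
        (by simp)))]
    exact Finset.sum_congr rfl fun a _ => (Function.iterate_succ_apply' _ _ _).symm

lemma iter_mul {n : ℕ} {i : Fin n} {f g : (Fin n → ℝ) → ℝ} (k : ℕ)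
    (hf : ContDiff ℝ (⊤ : ℕ∞) f) (hg : ContDiff ℝ (⊤ : ℕ∞) g) :
    (pderiv' n i)^[k] (f * g) =
      ∑ j ∈ Finset.range (k + 1),
        ((k.choose j : ℕ) : ℝ) • ((pderiv' n i)^[j] f * (pderiv' n i)^[k - j] g) := by
  induction k with
  | zero => simp
  | succ k ih =>
    have hdiff : ∀ m, Differentiable ℝ ((pderiv' n i)^[m] f) := fun m =>
      (iter_contDiff m hf).differentiable (by simp)
    have hdifg : ∀ m, Differentiable ℝ ((pderiv' n i)^[m] g) := fun m =>
      (iter_contDiff m hg).differentiable (by simp)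
    rw [Function.iterate_succ_apply', ih,
      pderiv'_sum (f := fun j => ((k.choose j : ℕ) : ℝ) •
          ((pderiv' n i)^[j] f * (pderiv' n i)^[k - j] g))
        (fun j _ => by
          exact ((hdiff j).mul (hdifg (k - j))).const_smul ((k.choose j : ℕ) : ℝ))]
    have hterm : ∀ j ∈ Finset.range (k + 1),
        pderiv' n i (((k.choose j : ℕ) : ℝ) • ((pderiv' n i)^[j] f * (pderiv' n i)^[k - j] g))
          = ((k.choose j : ℕ) : ℝ) • ((pderiv' n i)^[j + 1] f * (pderiv' n i)^[k - j] g)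
          + ((k.choose j : ℕ) : ℝ) • ((pderiv' n i)^[j] f * (pderiv' n i)^[k - j + 1] g) := by
      intro j _
      rw [pderiv'_smul (c := ((k.choose j : ℕ) : ℝ))
          (f := (pderiv' n i)^[j] f * (pderiv' n i)^[k - j] g)
          (by exact (hdiff j).mul (hdifg (k - j))),
        pderiv'_mul (hdiff j) (hdifg (k - j)),
        smul_add, Function.iterate_succ_apply', Function.iterate_succ_apply']
    rw [Finset.sum_congr rfl hterm, Finset.sum_add_distrib]
    set F : ℕ → (Fin n → ℝ) → ℝ := fun j => (pderiv' n i)^[j] f with hF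
    set G : ℕ → (Fin n → ℝ) → ℝ := fun j => (pderiv' n i)^[j] g with hGdef
    have e2 : ∑ j ∈ Finset.range (k + 1), ((k.choose j : ℕ) : ℝ) • (F j * G (k - j + 1))
        = ∑ j ∈ Finset.range (k + 1), ((k.choose j : ℕ) : ℝ) • (F j * G (k + 1 - j)) := by
      refine Finset.sum_congr rfl fun j hj => ?_
      have := Finset.mem_range.mp hj
      have h : k - j + 1 = k + 1 - j := by omega
      rw [h]
    rw [e2]
    have hB : ∑ j ∈ Finset.range (k + 1), ((k.choose j : ℕ) : ℝ) • (F j * G (k + 1 - j))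
        = (∑ j ∈ Finset.range (k + 1), ((k.choose (j+1) : ℕ) : ℝ) • (F (j+1) * G (k - j)))
        + F 0 * G (k + 1) := by
      rw [Finset.sum_range_succ' (fun j => ((k.choose j : ℕ) : ℝ) • (F j * G (k + 1 - j))) k]
      rw [Finset.sum_range_succ (fun j => ((k.choose (j+1) : ℕ) : ℝ) • (F (j+1) * G (k - j))) k]
      simp only [Nat.choose_succ_self, Nat.cast_zero, zero_smul, add_zero,
        Nat.choose_zero_right, Nat.cast_one, one_smul, Nat.sub_zero]
      congr 1
      refine Finset.sum_congr rfl fun j hj => ?_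
      have h : k + 1 - (j + 1) = k - j := by omega
      rw [h]
    rw [Finset.sum_range_succ' (fun j => (((k+1).choose j : ℕ) : ℝ) • (F j * G (k + 1 - j)))
      (k+1)]
    have hsplit : ∀ j ∈ Finset.range (k + 1),
        (((k+1).choose (j+1) : ℕ) : ℝ) • (F (j+1) * G (k + 1 - (j+1)))
        = ((k.choose j : ℕ) : ℝ) • (F (j+1) * G (k - j))
        + ((k.choose (j+1) : ℕ) : ℝ) • (F (j+1) * G (k - j)) := by
      intro j hj
      have h1 : k + 1 - (j + 1) = k - j := by omega
      rw [h1, Nat.choose_succ_succ, Nat.cast_add, add_smul]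
    rw [Finset.sum_congr rfl hsplit, Finset.sum_add_distrib, hB]
    simp only [Nat.choose_zero_right, Nat.cast_one, one_smul, Nat.sub_zero]
    abel

def mderivL (n : ℕ) (l : List (Fin n)) (β : Fin n → ℕ) (f : (Fin n → ℝ) → ℝ) :
    (Fin n → ℝ) → ℝ :=
  l.foldr (fun i g => (pderiv' n i)^[β i] g) f

lemma mderivL_nil {n : ℕ} (β : Fin n → ℕ) (f : (Fin n → ℝ) → ℝ) :
    mderivL n [] β f = f := rfl

lemma mderivL_cons {n : ℕ} (i : Fin n) (l : List (Fin n)) (β : Fin n → ℕ)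
    (f : (Fin n → ℝ) → ℝ) :
    mderivL n (i :: l) β f = (pderiv' n i)^[β i] (mderivL n l β f) := rfl

lemma mderivL_congr {n : ℕ} {l : List (Fin n)} {β β' : Fin n → ℕ}
    (h : ∀ i ∈ l, β i = β' i) (f : (Fin n → ℝ) → ℝ) :
    mderivL n l β f = mderivL n l β' f := by
  induction l with
  | nil => rfl
  | cons i l ih =>
    rw [mderivL_cons, mderivL_cons, ih (fun j hj => h j (List.mem_cons_of_mem i hj)),
      h i (List.mem_cons_self)]

lemma mderivL_contDiff {n : ℕ} {l : List (Fin n)} {β : Fin n → ℕ} {f : (Fin n → ℝ) → ℝ}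
    (hf : ContDiff ℝ (⊤ : ℕ∞) f) : ContDiff ℝ (⊤ : ℕ∞) (mderivL n l β f) := by
  induction l with
  | nil => exact hf
  | cons i l ih => exact iter_contDiff _ ih

/-- The index set for the Leibniz formula along a list of directions. -/
def leibS (n : ℕ) (l : List (Fin n)) (β : Fin n → ℕ) : Finset (Fin n → ℕ) :=
  Fintype.piFinset fun j => if j ∈ l then Finset.range (β j + 1) else ({0} : Finset ℕ)

lemma mderivL_mul {n : ℕ} (l : List (Fin n)) (β : Fin n → ℕ)
    {f g : (Fin n → ℝ) → ℝ} (hf : ContDiff ℝ (⊤ : ℕ∞) f) (hg : ContDiff ℝ (⊤ : ℕ∞) g)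
    (hl : l.Nodup) :
    mderivL n l β (f * g) = ∑ γ ∈ leibS n l β,
      ((∏ j, (β j).choose (γ j) : ℕ) : ℝ) •
        (mderivL n l γ f * mderivL n l (fun j => β j - γ j) g) := by
  induction l with
  | nil =>
    have hS : leibS n [] β = {fun _ => 0} := by
      ext γ
      simp [leibS, Fintype.mem_piFinset, funext_iff]
    rw [hS, Finset.sum_singleton]
    simp [mderivL_nil]
  | cons i l' ih =>
    obtain ⟨hil, hl'⟩ := List.nodup_cons.mp hl
    rw [mderivL_cons, ih hl']
    rw [iter_sum (f := fun γ => ((∏ j, (β j).choose (γ j) : ℕ) : ℝ) •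
          (mderivL n l' γ f * mderivL n l' (fun j => β j - γ j) g))
        (β i)
        (fun γ _ => by
          exact ((mderivL_contDiff hf).mul (mderivL_contDiff hg)).const_smul
            ((∏ j, (β j).choose (γ j) : ℕ) : ℝ))]
    have hstep : ∀ γ ∈ leibS n l' β,
        (pderiv' n i)^[β i] (((∏ j, (β j).choose (γ j) : ℕ) : ℝ) •
            (mderivL n l' γ f * mderivL n l' (fun j => β j - γ j) g))
        = ∑ j ∈ Finset.range (β i + 1),
            (((∏ a, (β a).choose (γ a) : ℕ) : ℝ) * (((β i).choose j : ℕ) : ℝ)) •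
              ((pderiv' n i)^[j] (mderivL n l' γ f) *
                (pderiv' n i)^[β i - j] (mderivL n l' (fun a => β a - γ a) g)) := by
      intro γ _
      rw [iter_smul (c := ((∏ j, (β j).choose (γ j) : ℕ) : ℝ))
          (f := mderivL n l' γ f * mderivL n l' (fun j => β j - γ j) g) (β i)
          (by exact (mderivL_contDiff hf).mul (mderivL_contDiff hg)),
        iter_mul (β i) (mderivL_contDiff hf) (mderivL_contDiff hg), Finset.smul_sum]
      exact Finset.sum_congr rfl fun j _ => by rw [smul_smul]
    rw [Finset.sum_congr rfl hstep]
    rw [← Finset.sum_product' (s := leibS n l' β) (t := Finset.range (β i + 1))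
      (f := fun γ j => (((∏ a, (β a).choose (γ a) : ℕ) : ℝ) * (((β i).choose j : ℕ) : ℝ)) •
        ((pderiv' n i)^[j] (mderivL n l' γ f) *
          (pderiv' n i)^[β i - j] (mderivL n l' (fun a => β a - γ a) g)))]
    refine Finset.sum_nbij' (fun p => Function.update p.1 i p.2)
      (fun γ' => (Function.update γ' i 0, γ' i)) ?_ ?_ ?_ ?_ ?_
    · rintro ⟨γ, j⟩ hp
      rw [Finset.mem_product] at hp
      obtain ⟨hγ, hj⟩ := hp
      simp only [leibS, Fintype.mem_piFinset] at hγ ⊢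
      intro a
      by_cases ha : a = i
      · subst ha
        simpa [Function.update_self, List.mem_cons] using Finset.mem_range.mp hj
      · rw [Function.update_of_ne ha]
        have := hγ a
        by_cases hal : a ∈ l'
        · simpa [hal, List.mem_cons, ha] using this
        · simpa [hal, List.mem_cons, ha] using this
    · intro γ' hγ'
      simp only [leibS, Fintype.mem_piFinset] at hγ'
      rw [Finset.mem_product]
      constructor
      · simp only [leibS, Fintype.mem_piFinset]
        intro a
        by_cases ha : a = i
        · subst ha
          simp [Function.update_self, hil]
        · rw [Function.update_of_ne ha]
          have := hγ' a
          by_cases hal : a ∈ l'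
          · simpa [hal, List.mem_cons, ha] using this
          · simpa [hal, List.mem_cons, ha] using this
      · have := hγ' i
        simpa [List.mem_cons] using this
    · rintro ⟨γ, j⟩ hp
      rw [Finset.mem_product] at hp
      have hγi : γ i = 0 := by
        have := (Fintype.mem_piFinset.mp hp.1) i
        simpa [hil] using this
      dsimp only
      rw [Function.update_idem, Function.update_self, ← hγi, Function.update_eq_self]
    · intro γ' _
      dsimp only
      rw [Function.update_idem, Function.update_eq_self]
    · rintro ⟨γ, j⟩ hp
      rw [Finset.mem_product] at hp
      obtain ⟨hγ, hj⟩ := hp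
      have hγi : γ i = 0 := by
        have := (Fintype.mem_piFinset.mp hγ) i
        simpa [hil] using this
      have hne : ∀ a ∈ l', a ≠ i := fun a ha h => hil (by rwa [h] at ha)
      have c1 : mderivL n (i :: l') (Function.update γ i j) f
          = (pderiv' n i)^[j] (mderivL n l' γ f) := by
        rw [mderivL_cons, Function.update_self,
          mderivL_congr (fun a ha => Function.update_of_ne (hne a ha) _ _) f]
      have c2 : mderivL n (i :: l') (fun a => β a - Function.update γ i j a) g
          = (pderiv' n i)^[β i - j] (mderivL n l' (fun a => β a - γ a) g) := by
        rw [mderivL_cons, Function.update_self,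
          mderivL_congr (β := fun a => β a - Function.update γ i j a)
            (β' := fun a => β a - γ a)
            (fun a ha => by
              show β a - Function.update γ i j a = β a - γ a
              rw [Function.update_of_ne (hne a ha)]) g]
      have c3 : ((∏ a, (β a).choose (Function.update γ i j a) : ℕ) : ℝ)
          = ((∏ a, (β a).choose (γ a) : ℕ) : ℝ) * (((β i).choose j : ℕ) : ℝ) := by
        rw [← Nat.cast_mul]
        congr 1
        rw [Fintype.prod_eq_mul_prod_compl i (fun a => (β a).choose (Function.update γ i j a)),
          Fintype.prod_eq_mul_prod_compl i (fun a => (β a).choose (γ a)),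
          Function.update_self, hγi, Nat.choose_zero_right, one_mul]
        rw [mul_comm]
        congr 1
        refine Finset.prod_congr rfl fun a ha => ?_
        have hai : a ≠ i := by simpa using ha
        rw [Function.update_of_ne hai]
      dsimp only
      rw [c1, c2, c3]

lemma choose_mul_choose_le (p q r s : ℕ) :
    p.choose q * r.choose s ≤ (p + r).choose (q + s) := by
  rw [Nat.add_choose_eq]
  exact Finset.single_le_sum (f := fun ij : ℕ × ℕ => p.choose ij.1 * r.choose ij.2)
    (fun _ _ => Nat.zero_le _) (Finset.HasAntidiagonal.mem_antidiagonal.mpr (rfl : q + s = q + s) : (q, s) ∈ Finset.HasAntidiagonal.antidiagonal (q + s))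

lemma prod_choose_le {n : ℕ} (β γ : Fin n → ℕ) :
    ∏ i, (β i).choose (γ i) ≤ (∑ i, β i).choose (∑ i, γ i) := by
  classical
  have : ∀ s : Finset (Fin n),
      ∏ i ∈ s, (β i).choose (γ i) ≤ (∑ i ∈ s, β i).choose (∑ i ∈ s, γ i) := by
    intro s
    induction s using Finset.cons_induction with
    | empty => simp
    | cons a s ha ih =>
      rw [Finset.prod_cons, Finset.sum_cons, Finset.sum_cons]
      calc (β a).choose (γ a) * ∏ i ∈ s, (β i).choose (γ i)
          ≤ (β a).choose (γ a) * (∑ i ∈ s, β i).choose (∑ i ∈ s, γ i) :=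
            Nat.mul_le_mul_left _ ih
        _ ≤ (β a + ∑ i ∈ s, β i).choose (γ a + ∑ i ∈ s, γ i) :=
            choose_mul_choose_le _ _ _ _
  exact this Finset.univ

lemma geom_bound (n : ℕ) {t : ℝ} (ht0 : 0 < t) (ht1 : t < 1) :
    ∃ C : ℝ, 0 ≤ C ∧ ∀ m : ℕ, ((m + 1 : ℕ) : ℝ) ^ n * t ^ m ≤ C := by
  have hsum : Summable (fun m : ℕ => ((m : ℝ)) ^ n * t ^ m) :=
    summable_pow_mul_geometric_of_norm_lt_one n
      (by rwa [Real.norm_eq_abs, abs_of_pos ht0])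
  have hsum2 : Summable (fun m : ℕ => ((m + 1 : ℕ) : ℝ) ^ n * t ^ (m + 1)) :=
    hsum.comp_injective (add_left_injective 1)
  have hsum3 : Summable (fun m : ℕ => ((m + 1 : ℕ) : ℝ) ^ n * t ^ m) := by
    have := hsum2.mul_left (1 / t)
    refine this.congr fun m => ?_
    field_simp
    ring
  refine ⟨∑' m, ((m + 1 : ℕ) : ℝ) ^ n * t ^ m, ?_, ?_⟩
  · exact tsum_nonneg fun m => by positivity
  · intro m
    exact le_hasSum hsum3.hasSum m fun j _ => by positivity

lemma mderiv_mul {n : ℕ} (β : Fin n → ℕ) {u v : (Fin n → ℝ) → ℝ}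
    (hu : ContDiff ℝ (⊤ : ℕ∞) u) (hv : ContDiff ℝ (⊤ : ℕ∞) v) :
    mderiv n β (u * v) = ∑ γ ∈ Fintype.piFinset (fun j => Finset.range (β j + 1)),
      ((∏ j, (β j).choose (γ j) : ℕ) : ℝ) •
        (mderiv n γ u * mderiv n (fun j => β j - γ j) v) := by
  have h1 : leibS n (List.finRange n) β = Fintype.piFinset (fun j => Finset.range (β j + 1)) := by
    unfold leibS
    congr 1
    funext j
    simp [List.mem_finRange]
  have h2 := mderivL_mul (List.finRange n) β hu hv (List.nodup_finRange n)
  rw [show mderiv n β (u * v) = mderivL n (List.finRange n) β (u * v) from rfl, h2, h1]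
  rfl

lemma roumieu_pointwise {n : ℕ} {ρ : ℝ} (hρ0 : 0 < ρ) {K : Set (Fin n → ℝ)}
    {w : (Fin n → ℝ) → ℝ} (hN : roumieuSeminorm n ρ K w < ⊤)
    (γ : Fin n → ℕ) {x : Fin n → ℝ} (hx : x ∈ K) :
    |mderiv n γ w x| ≤ (roumieuSeminorm n ρ K w).toReal *
      (∑ i, γ i).factorial / ρ ^ (∑ i, γ i) := by
  set a := (roumieuSeminorm n ρ K w).toReal with ha
  have ha0 : 0 ≤ a := ENNReal.toReal_nonneg
  have h1 : ENNReal.ofReal (ρ ^ (∑ i, γ i) / (∑ i, γ i).factorial * |mderiv n γ w x|)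
      ≤ roumieuSeminorm n ρ K w :=
    le_iSup_of_le γ (le_iSup_of_le x (le_iSup_of_le hx le_rfl))
  rw [show roumieuSeminorm n ρ K w = ENNReal.ofReal a from
    (ENNReal.ofReal_toReal hN.ne).symm] at h1
  have h2 : ρ ^ (∑ i, γ i) / (∑ i, γ i).factorial * |mderiv n γ w x| ≤ a :=
    (ENNReal.ofReal_le_ofReal_iff ha0).mp h1
  have hfact : (0:ℝ) < ((∑ i, γ i).factorial : ℝ) := by positivity
  rw [div_mul_eq_mul_div, div_le_iff₀ hfact] at h2
  rw [le_div_iff₀ (pow_pos hρ0 _)]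
  nlinarith [abs_nonneg (mderiv n γ w x), pow_pos hρ0 (∑ i, γ i)]

/-- The pointwise product is bilinear and continuous from
`C^0_{ω,ρ}(cl Ω) × C^0_{ω,ρ}(cl Ω)` to `C^0_{ω,ρ'}(cl Ω)` for every `ρ' ∈ ]0,ρ[`. -/
theorem roumieu_product_continuous (n : ℕ) (ρ ρ' : ℝ) (hρ' : 0 < ρ') (hρ : ρ' < ρ)
    (Ω : Set (Fin n → ℝ)) (hΩo : IsOpen Ω) (hΩb : IsBounded Ω) :
    ∃ C : ℝ, 0 ≤ C ∧ ∀ u v : (Fin n → ℝ) → ℝ, ContDiff ℝ (⊤ : ℕ∞) u → ContDiff ℝ (⊤ : ℕ∞) v →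
      roumieuSeminorm n ρ (closure Ω) u < ⊤ → roumieuSeminorm n ρ (closure Ω) v < ⊤ →
      roumieuSeminorm n ρ' (closure Ω) (u * v) ≤
        ENNReal.ofReal C * roumieuSeminorm n ρ (closure Ω) u *
          roumieuSeminorm n ρ (closure Ω) v := by
  classical
  have hρ0 : (0:ℝ) < ρ := lt_trans hρ' hρ
  have ht0 : 0 < ρ' / ρ := div_pos hρ' hρ0
  have ht1 : ρ' / ρ < 1 := (div_lt_one hρ0).mpr hρ
  obtain ⟨C, hC0, hC⟩ := geom_bound n ht0 ht1
  refine ⟨C, hC0, ?_⟩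
  intro u v hu hv hNu hNv
  have hu' : ContDiff ℝ (⊤ : ℕ∞) u := hu.of_le (by simp)
  have hv' : ContDiff ℝ (⊤ : ℕ∞) v := hv.of_le (by simp)
  set K := closure Ω with hK
  set a := (roumieuSeminorm n ρ K u).toReal with ha
  set b := (roumieuSeminorm n ρ K v).toReal with hb
  have ha0 : 0 ≤ a := ENNReal.toReal_nonneg
  have hb0 : 0 ≤ b := ENNReal.toReal_nonneg
  have main : ∀ (β : Fin n → ℕ) (x : Fin n → ℝ), x ∈ K →
      ρ' ^ (∑ i, β i) / (∑ i, β i).factorial * |mderiv n β (u * v) x| ≤ C * a * b := by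
    intro β x hx
    set m := ∑ i, β i with hm
    set S := Fintype.piFinset (fun j => Finset.range (β j + 1)) with hS
    have hfact : (0:ℝ) < (m.factorial : ℝ) := by positivity
    have happ : mderiv n β (u * v) x
        = ∑ γ ∈ S, ((∏ j, (β j).choose (γ j) : ℕ) : ℝ) *
            (mderiv n γ u x * mderiv n (fun j => β j - γ j) v x) := by
      have h := congrFun (mderiv_mul β hu' hv') x
      rw [h, Finset.sum_apply]
      exact Finset.sum_congr rfl fun γ _ => by
        simp [Pi.smul_apply, Pi.mul_apply, smul_eq_mul]
    have habs : |mderiv n β (u * v) x| ≤ ∑ γ ∈ S, ((∏ j, (β j).choose (γ j) : ℕ) : ℝ) *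
        (|mderiv n γ u x| * |mderiv n (fun j => β j - γ j) v x|) := by
      rw [happ]
      refine (Finset.abs_sum_le_sum_abs _ _).trans (Finset.sum_le_sum fun γ _ => ?_)
      rw [abs_mul, abs_mul, Nat.abs_cast]
    have hterm : ∀ γ ∈ S, ((∏ j, (β j).choose (γ j) : ℕ) : ℝ) *
        (|mderiv n γ u x| * |mderiv n (fun j => β j - γ j) v x|)
        ≤ (m.factorial : ℝ) * (a * b) / ρ ^ m := by
      intro γ hγ
      have hγβ : ∀ j, γ j ≤ β j := fun j =>
        Nat.lt_succ_iff.mp (Finset.mem_range.mp (Fintype.mem_piFinset.mp hγ j))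
      set k := ∑ i, γ i with hk
      have hkm : k ≤ m := Finset.sum_le_sum fun i _ => hγβ i
      have hsub : ∑ i, (β i - γ i) = m - k :=
        Finset.sum_tsub_distrib Finset.univ fun i _ => hγβ i
      have h1 : |mderiv n γ u x| ≤ a * (k.factorial : ℝ) / ρ ^ k :=
        roumieu_pointwise hρ0 hNu γ hx
      have h2 : |mderiv n (fun j => β j - γ j) v x|
          ≤ b * ((m - k).factorial : ℝ) / ρ ^ (m - k) := by
        have h := roumieu_pointwise hρ0 hNv (fun j => β j - γ j) hx
        rwa [hsub] at h
      have h3 : ((∏ j, (β j).choose (γ j) : ℕ) : ℝ) ≤ (m.choose k : ℝ) :=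
        Nat.cast_le.mpr (prod_choose_le β γ)
      have hprod0 : (0:ℝ) ≤ ((∏ j, (β j).choose (γ j) : ℕ) : ℝ) := Nat.cast_nonneg _
      calc ((∏ j, (β j).choose (γ j) : ℕ) : ℝ) *
            (|mderiv n γ u x| * |mderiv n (fun j => β j - γ j) v x|)
          ≤ (m.choose k : ℝ) *
            ((a * (k.factorial : ℝ) / ρ ^ k) * (b * ((m - k).factorial : ℝ) / ρ ^ (m - k))) := by
            refine mul_le_mul h3 ?_ (by positivity) (by positivity)
            exact mul_le_mul h1 h2 (abs_nonneg _) (by positivity)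
        _ = ((m.choose k * k.factorial * (m - k).factorial : ℕ) : ℝ) * (a * b) / ρ ^ m := by
            rw [show ρ ^ m = ρ ^ k * ρ ^ (m - k) by
              rw [← pow_add]; congr 1; omega]
            push_cast
            field_simp
        _ = (m.factorial : ℝ) * (a * b) / ρ ^ m := by
            rw [Nat.choose_mul_factorial_mul_factorial hkm]
    have hsum : |mderiv n β (u * v) x|
        ≤ (S.card : ℝ) * ((m.factorial : ℝ) * (a * b) / ρ ^ m) := by
      refine habs.trans ?_
      have := Finset.sum_le_card_nsmul S _ _ hterm
      rwa [nsmul_eq_mul] at this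
    have hcard : (S.card : ℝ) ≤ ((m + 1 : ℕ) : ℝ) ^ n := by
      rw [hS, Fintype.card_piFinset]
      have hle : ∀ j, β j + 1 ≤ m + 1 := fun j =>
        Nat.succ_le_succ (Finset.single_le_sum (fun i _ => Nat.zero_le _) (Finset.mem_univ j))
      calc ((∏ j, (Finset.range (β j + 1)).card : ℕ) : ℝ)
          = ((∏ j, (β j + 1) : ℕ) : ℝ) := by simp [Finset.card_range]
        _ ≤ (((m + 1) ^ n : ℕ) : ℝ) := by
            refine Nat.cast_le.mpr ?_
            calc ∏ j, (β j + 1) ≤ ∏ _j : Fin n, (m + 1) :=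
                  Finset.prod_le_prod (fun _ _ => Nat.zero_le _) (fun j _ => hle j)
              _ = (m + 1) ^ n := by simp [Finset.prod_const, Finset.card_univ]
        _ = ((m + 1 : ℕ) : ℝ) ^ n := by push_cast; ring
    have hfinal : |mderiv n β (u * v) x|
        ≤ ((m + 1 : ℕ) : ℝ) ^ n * ((m.factorial : ℝ) * (a * b) / ρ ^ m) := by
      refine hsum.trans ?_
      exact mul_le_mul_of_nonneg_right hcard (by positivity)
    calc ρ' ^ m / (m.factorial : ℝ) * |mderiv n β (u * v) x|
        ≤ ρ' ^ m / (m.factorial : ℝ) *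
          (((m + 1 : ℕ) : ℝ) ^ n * ((m.factorial : ℝ) * (a * b) / ρ ^ m)) := by
          exact mul_le_mul_of_nonneg_left hfinal (by positivity)
      _ = ((m + 1 : ℕ) : ℝ) ^ n * (ρ' / ρ) ^ m * (a * b) := by
          rw [div_pow]
          field_simp
      _ ≤ C * (a * b) := by
          exact mul_le_mul_of_nonneg_right (hC m) (by positivity)
      _ = C * a * b := by ring
  have hNu_eq : roumieuSeminorm n ρ K u = ENNReal.ofReal a :=
    (ENNReal.ofReal_toReal hNu.ne).symm
  have hNv_eq : roumieuSeminorm n ρ K v = ENNReal.ofReal b :=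
    (ENNReal.ofReal_toReal hNv.ne).symm
  rw [hNu_eq, hNv_eq, ← ENNReal.ofReal_mul hC0, ← ENNReal.ofReal_mul (mul_nonneg hC0 ha0)]
  refine iSup_le fun β => iSup_le fun x => iSup_le fun hx => ?_
  exact ENNReal.ofReal_le_ofReal (main β x hx)

end
end

section
/- Let Ω be a bounded open connected subset of R^n (n ≥ 2) such that R^n \ cl Ω is connected and cl Ω ⊆ Q. Then the periodically perforated set S[Ω]^− := R^n \ ∪_{z ∈ Z^n} cl(Ω + qz) is connected. -/
open Bornology

/-- The fundamental periodicity cell `Q = ∏_j ]0, q_j[`. -/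
def cell (n : ℕ) (q : Fin n → ℝ) : Set (Fin n → ℝ) :=
  Set.univ.pi fun i => Set.Ioo 0 (q i)

/-- The periodically perforated domain `S[Ω]⁻ = ℝ^n \ ⋃_{z ∈ ℤ^n} cl(Ω + qz)`. -/
def perfDomain (n : ℕ) (q : Fin n → ℝ) (Ω : Set (Fin n → ℝ)) : Set (Fin n → ℝ) :=
  (⋃ z : Fin n → ℤ, (fun x => x + fun i => (z i : ℝ) * q i) '' closure Ω)ᶜ

/-! Since `n ≥ 2`, the hyperplanes `x i = k * q i` form a connected grid, which misses every
hole, and each closed cell `q * (z + [0,1]^n)` meets no hole but its own. A point `x` of the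
perforated set lies in some closed cell `z` and outside the `z`-th hole, whose complement is path
connected. A path there from `x` to a point outside the cell stays in the cell, hence avoids all
holes, until it first reaches the cell boundary, which lies in the grid. -/

open Set

theorem Path.exists_image_Iic_subset_and_mem_frontier {X : Type*} [TopologicalSpace X]
    {x y : X} {K : Set X} (γ : Path x y) (hK : IsClosed K) (hx : x ∈ K) (hy : y ∉ K) :
    ∃ t, γ '' Iic t ⊆ K ∧ γ t ∈ frontier K := by
  set T := γ ⁻¹' Kᶜ
  have hT : T.Nonempty := ⟨1, by simpa [T] using hy⟩
  set t := sInf T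
  have hIic : Iic t ⊆ γ ⁻¹' K := by
    rcases eq_or_ne t 0 with h0 | h0
    · intro s hs
      rw [h0, mem_Iic] at hs
      simpa [le_antisymm hs unitInterval.nonneg'] using hx
    · rw [← closure_Iio' ⟨0, pos_iff_ne_zero.2 h0⟩]
      exact (hK.preimage γ.continuous).closure_subset_iff.2
        fun s hs => by simpa [T] using notMem_of_lt_csInf' (s := T) hs
  refine ⟨t, image_subset_iff.2 hIic, ?_⟩
  rw [frontier_eq_closure_inter_closure]
  exact ⟨subset_closure (hIic self_mem_Iic),
    map_mem_closure γ.continuous (csInf_mem_closure hT (OrderBot.bddBelow T)) fun s hs => hs⟩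

theorem isConnected_compl_iUnion_of_cells {X ι : Type*} [TopologicalSpace X]
    {H K : ι → Set X} {G : Set X} (hG : IsPreconnected G) (hGne : G.Nonempty)
    (hGH : ∀ z, Disjoint G (H z)) (hK : ∀ z, IsClosed (K z)) (hcover : ∀ x, ∃ z, x ∈ K z)
    (hfr : ∀ z, frontier (K z) ⊆ G) (hHK : ∀ z z', z' ≠ z → Disjoint (H z') (K z))
    (hHsub : ∀ z, H z ⊆ K z) (hpc : ∀ z, IsPathConnected (H z)ᶜ) (hKc : ∀ z, (K z)ᶜ.Nonempty) :
    IsConnected (⋃ z, H z)ᶜ := by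
  obtain ⟨g, hg⟩ := hGne
  have hGsub : G ⊆ (⋃ z, H z)ᶜ := by
    simpa only [subset_compl_iff_disjoint_right, disjoint_iUnion_right] using hGH
  refine ⟨⟨g, hGsub hg⟩, isPreconnected_of_forall g fun x hx => ?_⟩
  obtain ⟨z, hxz⟩ := hcover x
  obtain ⟨y, hyK⟩ := hKc z
  obtain ⟨γ, hγ⟩ := (hpc z).joinedIn x (fun h => hx (mem_iUnion_of_mem z h)) y
    fun h => hyK (hHsub z h)
  obtain ⟨t, hsub, hfront⟩ := γ.exists_image_Iic_subset_and_mem_frontier (hK z) hxz hyK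
  have hA : γ '' Iic t ⊆ (⋃ z, H z)ᶜ := by
    rintro _ ⟨s, hs, rfl⟩
    simp only [mem_compl_iff, mem_iUnion, not_exists]
    intro z' hz'
    rcases eq_or_ne z' z with rfl | hne
    · exact hγ s hz'
    · exact (hHK z z' hne).notMem_of_mem_left hz' (hsub ⟨s, hs, rfl⟩)
  refine ⟨γ '' Iic t ∪ G, union_subset hA hGsub, Or.inr hg,
    Or.inl ⟨0, unitInterval.nonneg', γ.source⟩, ?_⟩
  exact (isPreconnected_Iic.image _ γ.continuous.continuousOn).union _ ⟨t, self_mem_Iic, rfl⟩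
    (hfr z hfront) hG

theorem int_eq_of_mem_Ioo_of_mem_Icc {q a : ℝ} (hq : 0 < q) {k m : ℤ}
    (hk : a ∈ Ioo (k * q) (k * q + q)) (hm : a ∈ Icc (m * q) (m * q + q)) : k = m := by
  have h₁ : (k : ℝ) * q < (m + 1) * q := by linarith [hk.1, hm.2]
  have h₂ : (m : ℝ) * q < (k + 1) * q := by linarith [hk.2, hm.1]
  have h₁' : k < m + 1 := by exact_mod_cast lt_of_mul_lt_mul_right h₁ hq.le
  have h₂' : m < k + 1 := by exact_mod_cast lt_of_mul_lt_mul_right h₂ hq.le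
  omega

theorem int_mul_notMem_Ioo {q : ℝ} (hq : 0 < q) (k m : ℤ) :
    (m : ℝ) * q ∉ Ioo (k * q) (k * q + q) := by
  rintro ⟨h₁, h₂⟩
  rw [← add_one_mul] at h₂
  have h₁' : k < m := by exact_mod_cast lt_of_mul_lt_mul_right h₁ hq.le
  have h₂' : m < k + 1 := by exact_mod_cast lt_of_mul_lt_mul_right h₂ hq.le
  omega

section Lattice

variable {ι : Type*} (q : ι → ℝ)

def latticeShift (z : ι → ℤ) : ι → ℝ := fun i => z i * q i

def openCell (z : ι → ℤ) : Set (ι → ℝ) := univ.pi fun i => Ioo (z i * q i) (z i * q i + q i)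

def closedCell (z : ι → ℤ) : Set (ι → ℝ) := univ.pi fun i => Icc (z i * q i) (z i * q i + q i)

theorem isClosed_closedCell (z : ι → ℤ) : IsClosed (closedCell q z) :=
  isClosed_set_pi fun _ _ => isClosed_Icc

theorem openCell_subset_closedCell (z : ι → ℤ) : openCell q z ⊆ closedCell q z :=
  pi_mono fun _ _ => Ioo_subset_Icc_self

theorem exists_mem_closedCell (hq : ∀ i, 0 < q i) (x : ι → ℝ) : ∃ z, x ∈ closedCell q z := by
  refine ⟨fun i => ⌊x i / q i⌋, fun i _ => ⟨?_, ?_⟩⟩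
  · exact (le_div_iff₀ (hq i)).1 (Int.floor_le _)
  · rw [← add_one_mul]
    exact ((div_lt_iff₀ (hq i)).1 (Int.lt_floor_add_one _)).le

theorem compl_closedCell_nonempty [Nonempty ι] (z : ι → ℤ) : (closedCell q z)ᶜ.Nonempty := by
  obtain ⟨i⟩ := ‹Nonempty ι›
  exact ⟨fun j => z j * q j - 1, fun h => by linarith [(h i (mem_univ i)).1]⟩

theorem disjoint_openCell_closedCell (hq : ∀ i, 0 < q i) {z z' : ι → ℤ} (h : z' ≠ z) :
    Disjoint (openCell q z') (closedCell q z) := by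
  refine disjoint_left.2 fun x hx hx' => h (funext fun i => ?_)
  exact int_eq_of_mem_Ioo_of_mem_Icc (hq i) (hx i (mem_univ i)) (hx' i (mem_univ i))

theorem image_add_latticeShift_subset_openCell {A : Set (ι → ℝ)}
    (hA : A ⊆ univ.pi fun i => Ioo 0 (q i)) (z : ι → ℤ) :
    (· + latticeShift q z) '' A ⊆ openCell q z := by
  rintro _ ⟨w, hw, rfl⟩ i -
  obtain ⟨h₁, h₂⟩ := hA hw i (mem_univ i)
  constructor <;> simp only [Pi.add_apply, latticeShift] <;> linarith

def grid : Set (ι → ℝ) := ⋃ i, ⋃ k : ℤ, {x | x i = k * q i}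

theorem isPreconnected_grid [Nontrivial ι] : IsPreconnected (grid q) := by
  classical
  set P : ι → ℤ → Set (ι → ℝ) := fun i k => {x | x i = k * q i}
  have hP : ∀ i k, IsPreconnected (P i k) := fun i k =>
    (convex_hyperplane (LinearMap.proj (R := ℝ) (φ := fun _ : ι => ℝ) i).isLinear _).isPreconnected
  set Z := ⋃ i, P i 0
  have h0Z : (0 : ι → ℝ) ∈ Z := mem_iUnion_of_mem (Classical.arbitrary ι) (by simp [P])
  have hZ : IsPreconnected Z :=
    isPreconnected_iUnion ⟨0, mem_iInter.2 fun i => by simp [P]⟩ fun i => hP i 0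
  have hPZ : ∀ i k, IsPreconnected (P i k ∪ Z) := by
    intro i k
    obtain ⟨j, hji⟩ := exists_ne i
    refine (hP i k).union (Pi.single i (k * q i)) (by simp [P]) ?_ hZ
    exact mem_iUnion_of_mem j (by simp [P, hji])
  have hgrid : ⋃ i, ⋃ k, (P i k ∪ Z) = grid q := by
    simp only [← iUnion_union]
    exact union_eq_left.2 (iUnion_mono fun i => subset_iUnion (P i) 0)
  rw [← hgrid]
  exact isPreconnected_iUnion ⟨0, mem_iInter.2 fun i => mem_iUnion_of_mem 0 (Or.inr h0Z)⟩
    fun i => isPreconnected_iUnion ⟨0, mem_iInter.2 fun k => Or.inr h0Z⟩ (hPZ i)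

theorem zero_mem_grid [Nonempty ι] : (0 : ι → ℝ) ∈ grid q :=
  mem_iUnion_of_mem (Classical.arbitrary ι) (mem_iUnion_of_mem 0 (by simp))

theorem disjoint_grid_openCell (hq : ∀ i, 0 < q i) (z : ι → ℤ) :
    Disjoint (grid q) (openCell q z) := by
  refine disjoint_left.2 fun x hx hx' => ?_
  obtain ⟨i, k, hxi : x i = k * q i⟩ := mem_iUnion₂.1 hx
  exact int_mul_notMem_Ioo (hq i) (z i) k (hxi ▸ hx' i (mem_univ i))

theorem frontier_closedCell_subset_grid [Finite ι] (z : ι → ℤ) :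
    frontier (closedCell q z) ⊆ grid q := by
  intro x hx
  rw [frontier, (isClosed_closedCell q z).closure_eq, closedCell,
    interior_pi_set finite_univ] at hx
  simp only [interior_Icc, mem_sdiff, mem_pi, mem_univ, true_implies, not_forall] at hx
  obtain ⟨hx, i, hi⟩ := hx
  refine mem_iUnion_of_mem i ?_
  rcases (hx i).1.eq_or_lt with h | h
  · exact mem_iUnion_of_mem (z i) h.symm
  · refine mem_iUnion_of_mem (z i + 1) ?_
    rw [mem_ofPred_eq, Int.cast_add, Int.cast_one, add_one_mul]
    linarith [(hx i).2, not_lt.1 fun h' => hi ⟨h, h'⟩]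

end Lattice

theorem IsPathConnected.compl_image_add_right {X : Type*} [TopologicalSpace X] [AddGroup X]
    [ContinuousAdd X] {s : Set X} (hs : IsPathConnected sᶜ) (v : X) :
    IsPathConnected ((· + v) '' s)ᶜ := by
  rw [← image_compl_eq (f := (· + v)) (Equiv.addRight v).bijective]
  exact hs.image (continuous_add_const v)

theorem perfDomain_connected_general (n : ℕ) (hn : 2 ≤ n) (q : Fin n → ℝ) (hq : ∀ i, 0 < q i)
    (Ω : Set (Fin n → ℝ)) (hΩcc : IsConnected (closure Ω)ᶜ) (hΩQ : closure Ω ⊆ cell n q) :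
    IsConnected (perfDomain n q Ω) := by
  have : Nontrivial (Fin n) := Fin.nontrivial_iff_two_le.2 hn
  have hpc : IsPathConnected (closure Ω)ᶜ :=
    isClosed_closure.isOpen_compl.isConnected_iff_isPathConnected.1 hΩcc
  have hholes := image_add_latticeShift_subset_openCell q hΩQ
  exact isConnected_compl_iUnion_of_cells (H := fun z => (· + latticeShift q z) '' closure Ω)
    (isPreconnected_grid q) ⟨0, zero_mem_grid q⟩
    (fun z => (disjoint_grid_openCell q hq z).mono_right (hholes z)) (isClosed_closedCell q)
    (exists_mem_closedCell q hq) (frontier_closedCell_subset_grid q)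
    (fun z z' h => (disjoint_openCell_closedCell q hq h).mono_left (hholes z'))
    (fun z => (hholes z).trans (openCell_subset_closedCell q z))
    (fun z => hpc.compl_image_add_right _) (compl_closedCell_nonempty q)

/-- If `Ω` is a bounded open connected subset of `ℝ^n` (`n ≥ 2`) such that
`ℝ^n \ cl Ω` is connected and `cl Ω ⊆ Q`, then the periodically perforated set
`S[Ω]⁻` is connected. -/
theorem perfDomain_connected (n : ℕ) (hn : 2 ≤ n) (q : Fin n → ℝ) (hq : ∀ i, 0 < q i)
    (Ω : Set (Fin n → ℝ)) (hΩo : IsOpen Ω) (hΩb : IsBounded Ω) (hΩc : IsConnected Ω)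
    (hΩcc : IsConnected (closure Ω)ᶜ) (hΩQ : closure Ω ⊆ cell n q) :
    IsConnected (perfDomain n q Ω) :=
  perfDomain_connected_general n hn q hq Ω hΩcc hΩQ
end
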